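/- If H is a finitely generated subgroup of PSL_2(Z) and g ∈ H is non-trivial, and x is a word of minimal length such that u = x⁻¹gx is cyclically reduced, then the Stallings graph of H has a path labeled x from the base vertex to some vertex v₁ and a cycle labeled u at v₁. -/

import Mathlib

/-- Relators of the presentation `⟨a, b ∣ a² = b³ = 1⟩`. -/
def pslRels : Set (FreeGroup Bool) := {FreeGroup.of true ^ 2, FreeGroup.of false ^ 3}

/-- The modular group `PSL₂(ℤ) = ⟨a, b ∣ a² = b³ = 1⟩ = ℤ/2 * ℤ/3`. -/
abbrev PSL2Z : Type := PresentedGroup pslRels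

/-- The order-2 generator `a`. -/
def gen_a : PSL2Z := PresentedGroup.of true

/-- The order-3 generator `b`. -/
def gen_b : PSL2Z := PresentedGroup.of false

/-- The alphabet `{a, b, b⁻¹}`. -/
inductive Letter : Type
  | A | B | Binv
deriving DecidableEq

/-- Interpretation of a letter in `PSL₂(ℤ)`. -/
def Letter.toG : Letter → PSL2Z
  | .A => gen_a
  | .B => gen_b
  | .Binv => gen_b⁻¹

/-- Evaluation of a word over `{a, b, b⁻¹}` in `PSL₂(ℤ)`. -/
def evalWord (w : List Letter) : PSL2Z := (w.map Letter.toG).prod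

/-- Two adjacent letters alternate between `a` and `{b, b⁻¹}`. -/
def AltPair (x y : Letter) : Prop := (x = .A ∧ y ≠ .A) ∨ (x ≠ .A ∧ y = .A)

/-- A word is in normal form (freely reduced, no factor `a²`, `b²`, `b⁻²`):
it has length ≤ 1 or alternates `a` with letters in `{b, b⁻¹}`. -/
def NormalWord (w : List Letter) : Prop := w.Chain' AltPair

/-- `w` is a geodesic representative of `g`. -/
def Geodesic (w : List Letter) (g : PSL2Z) : Prop :=
  evalWord w = g ∧ ∀ w' : List Letter, evalWord w' = g → w.length ≤ w'.length

/-- A cyclically reduced word: a normal form of length 1, or starting with `a`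
and ending in `{b, b⁻¹}`, or starting in `{b, b⁻¹}` and ending with `a`. -/
def CyclicallyReducedWord (w : List Letter) : Prop :=
  NormalWord w ∧ (w.length = 1 ∨
    ∃ x y, w.head? = some x ∧ w.getLast? = some y ∧
      ((x = .A ∧ y ≠ .A) ∨ (x ≠ .A ∧ y = .A)))

/-- The right-coset equivalence: `x ≈ y` iff `x y⁻¹ ∈ H` (so `Hx = Hy`). -/
def cosetSetoid (H : Subgroup PSL2Z) : Setoid PSL2Z where
  r x y := x * y⁻¹ ∈ H
  iseqv := by
    refine ⟨fun x => by simpa using H.one_mem, fun {x y} h => ?_, fun {x y z} hxy hyz => ?_⟩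
    · simpa [mul_inv_rev] using H.inv_mem h
    · simpa [mul_assoc] using H.mul_mem hxy hyz

/-- The vertex set of the Schreier graph of `H`: right cosets of `H`. -/
def Coset (H : Subgroup PSL2Z) : Type := Quotient (cosetSetoid H)

/-- The base vertex `H·1` of the Schreier graph. -/
def base (H : Subgroup PSL2Z) : Coset H := Quotient.mk (cosetSetoid H) 1

/-- Reading a letter from a vertex of the Schreier graph: `Hg ↦ Hgℓ`. -/
def step {H : Subgroup PSL2Z} (v : Coset H) (ℓ : Letter) : Coset H :=
  Quotient.map (fun g => g * ℓ.toG)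
    (fun x y hxy => by
      change x * y⁻¹ ∈ H at hxy
      change x * ℓ.toG * (y * ℓ.toG)⁻¹ ∈ H
      simpa [mul_inv_rev, mul_assoc] using hxy) v

/-- Reading a word from a vertex of the Schreier graph. -/
def readW {H : Subgroup PSL2Z} (v : Coset H) (w : List Letter) : Coset H :=
  w.foldl step v

/-- Some geodesic (normal-form) cycle at the base vertex reads letter `m`
from the vertex `u`. -/
def edgeOkAux (H : Subgroup PSL2Z) (u : Coset H) (m : Letter) : Prop :=
  ∃ w p q : List Letter, NormalWord w ∧ evalWord w ∈ H ∧
    w = p ++ m :: q ∧ readW (base H) p = u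

/-- Traversing letter `ℓ` from `v` uses an edge of the Stallings graph `Γ(H)`
(the subgraph of the Schreier graph spanned by the geodesic cycles at the base
vertex); `a`-edges and `b`-edges may be traversed in either direction. -/
def edgeOk (H : Subgroup PSL2Z) (v : Coset H) : Letter → Prop
  | .A => edgeOkAux H v .A ∨ edgeOkAux H (step v .A) .A
  | .B => edgeOkAux H v .B ∨ edgeOkAux H (step v .B) .Binv
  | .Binv => edgeOkAux H v .Binv ∨ edgeOkAux H (step v .Binv) .B

/-- `w` labels a path in the Stallings graph `Γ(H)` starting at `v`. -/
def labelsPathFrom (H : Subgroup PSL2Z) : Coset H → List Letter → Prop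
  | _, [] => True
  | v, ℓ :: w => edgeOk H v ℓ ∧ labelsPathFrom H (step v ℓ) w

/-- `w` labels a cycle at `v` in the Stallings graph `Γ(H)`. -/
def labelsCycleAt (H : Subgroup PSL2Z) (v : Coset H) (w : List Letter) : Prop :=
  labelsPathFrom H v w ∧ readW v w = v

/-- `v` is a vertex of the Stallings graph `Γ(H)`. -/
def StallingsVertex (H : Subgroup PSL2Z) (v : Coset H) : Prop :=
  ∃ w p q : List Letter, NormalWord w ∧ evalWord w ∈ H ∧ w = p ++ q ∧
    readW (base H) p = v

/-- `H` is almost malnormal: `H ∩ H^x` is finite for every `x ∉ H`. -/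
def AlmostMalnormal (H : Subgroup PSL2Z) : Prop :=
  ∀ x : PSL2Z, x ∉ H → {g : PSL2Z | g ∈ H ∧ x * g * x⁻¹ ∈ H}.Finite

/-!
A minimal conjugator `x` is a normal form; if it ends with the letter `ℓ`, then `u` neither
begins with `ℓ⁻¹` nor ends with `ℓ`, since otherwise rotating `u` would give a shorter
conjugator. Hence either `x u x⁻¹` is a normal form of `g`, or exactly one of its two junctions
merges two equal letters `b^{±1}`; then the normal form of `g²` is built from two copies of `u`
and contains the required subwords. A subword of a normal form of an element of `H` is read in
the Stallings graph from the vertex reached by the preceding prefix.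
-/

lemma sq_conj_of_mul_self_eq_inv {G : Type*} [Group G] {c : G} (hc : c * c = c⁻¹) (x y : G) :
    (x * c * y * c * x⁻¹) ^ 2 = x * c * y * c⁻¹ * y * c * x⁻¹ := by
  calc (x * c * y * c * x⁻¹) ^ 2 = x * c * y * (c * c) * y * c * x⁻¹ := by rw [sq]; group
    _ = x * c * y * c⁻¹ * y * c * x⁻¹ := by rw [hc]

lemma gen_a_sq : gen_a ^ 2 = 1 := by
  rw [gen_a, PresentedGroup.of, ← map_pow]
  exact PresentedGroup.one_of_mem (Set.mem_insert _ _)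

lemma gen_b_pow_three : gen_b ^ 3 = 1 := by
  rw [gen_b, PresentedGroup.of, ← map_pow]
  exact PresentedGroup.one_of_mem (Set.mem_insert_of_mem _ rfl)

namespace Letter

def inv : Letter → Letter
  | .A => .A
  | .B => .Binv
  | .Binv => .B

@[simp]
lemma inv_inv (ℓ : Letter) : ℓ.inv.inv = ℓ := by cases ℓ <;> rfl

@[simp]
lemma inv_inj {a b : Letter} : a.inv = b.inv ↔ a = b := by cases a <;> cases b <;> decide

@[simp]
lemma inv_eq_A_iff {ℓ : Letter} : ℓ.inv = .A ↔ ℓ = .A := by cases ℓ <;> decide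

@[simp]
lemma toG_inv (ℓ : Letter) : ℓ.inv.toG = ℓ.toG⁻¹ := by
  cases ℓ
  · exact (inv_eq_of_mul_eq_one_right (show gen_a * gen_a = 1 by rw [← sq, gen_a_sq])).symm
  · rfl
  · exact (_root_.inv_inv _).symm

lemma toG_mul_self {ℓ : Letter} (hℓ : ℓ ≠ .A) : ℓ.toG * ℓ.toG = ℓ.toG⁻¹ := by
  have hb : gen_b * gen_b = gen_b⁻¹ :=
    eq_inv_of_mul_eq_one_left (by rw [← pow_three', gen_b_pow_three])
  cases ℓ
  · exact absurd rfl hℓ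
  · exact hb
  · rw [toG, ← mul_inv_rev, hb]

lemma inv_toG_mul_self {ℓ : Letter} (hℓ : ℓ ≠ .A) : ℓ.toG⁻¹ * ℓ.toG⁻¹ = ℓ.toG := by
  rw [← mul_inv_rev, toG_mul_self hℓ, _root_.inv_inv]

lemma eq_inv_or_eq_of_not_altPair {a b : Letter} (h : ¬AltPair a b) :
    b = a.inv ∨ (a = b ∧ a ≠ .A) := by
  cases a <;> cases b <;> simp_all [AltPair, inv]

end Letter

lemma AltPair.symm {a b : Letter} (h : AltPair a b) : AltPair b a :=
  Or.symm (h.imp And.symm And.symm)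

lemma AltPair.inv {a b : Letter} (h : AltPair a b) : AltPair a.inv b.inv := by
  simpa [AltPair] using h

lemma altPair_congr_left {a a' b : Letter} (ha : a ≠ .A) (ha' : a' ≠ .A) :
    AltPair a b ↔ AltPair a' b := by
  simp [AltPair, ha, ha']

lemma altPair_congr_right {a b b' : Letter} (hb : b ≠ .A) (hb' : b' ≠ .A) :
    AltPair a b ↔ AltPair a b' := by
  simp [AltPair, hb, hb']

@[simp]
lemma evalWord_nil : evalWord [] = 1 := rfl

@[simp]
lemma evalWord_cons (ℓ : Letter) (w : List Letter) :
    evalWord (ℓ :: w) = ℓ.toG * evalWord w := by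
  simp [evalWord]

@[simp]
lemma evalWord_append (v w : List Letter) : evalWord (v ++ w) = evalWord v * evalWord w := by
  simp [evalWord]

def invWord (w : List Letter) : List Letter := (w.map Letter.inv).reverse

@[simp]
lemma invWord_nil : invWord [] = [] := rfl

@[simp]
lemma invWord_cons (ℓ : Letter) (w : List Letter) : invWord (ℓ :: w) = invWord w ++ [ℓ.inv] := by
  simp [invWord]

@[simp]
lemma invWord_append (v w : List Letter) : invWord (v ++ w) = invWord w ++ invWord v := by
  simp [invWord]

@[simp]
lemma invWord_invWord (w : List Letter) : invWord (invWord w) = w := by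
  simp [invWord, Function.comp_def]

@[simp]
lemma evalWord_invWord (w : List Letter) : evalWord (invWord w) = (evalWord w)⁻¹ := by
  induction w with
  | nil => simp
  | cons ℓ w ih => simp [ih]

@[simp]
lemma normalWord_nil : NormalWord [] := List.IsChain.nil

@[simp]
lemma normalWord_singleton (a : Letter) : NormalWord [a] := List.isChain_singleton a

lemma normalWord_append {v w : List Letter} :
    NormalWord (v ++ w) ↔
      NormalWord v ∧ NormalWord w ∧ ∀ a ∈ v.getLast?, ∀ b ∈ w.head?, AltPair a b :=
  List.isChain_append

lemma normalWord_cons {a : Letter} {w : List Letter} :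
    NormalWord (a :: w) ↔ (∀ b ∈ w.head?, AltPair a b) ∧ NormalWord w :=
  List.isChain_cons

lemma normalWord_split {v w : List Letter} {c : Letter} :
    NormalWord (v ++ c :: w) ↔ NormalWord (v ++ [c]) ∧ NormalWord (c :: w) :=
  List.isChain_split

lemma NormalWord.invWord {w : List Letter} (h : NormalWord w) : NormalWord (invWord w) :=
  List.isChain_reverse.2 <| (List.isChain_map _).2 <| h.imp fun _ _ hab => hab.inv.symm

lemma normalWord_concat_congr {w : List Letter} {c c' : Letter} (hc : c ≠ .A) (hc' : c' ≠ .A) :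
    NormalWord (w ++ [c]) ↔ NormalWord (w ++ [c']) := by
  simp [normalWord_append, altPair_congr_right hc hc']

lemma normalWord_cons_congr {w : List Letter} {c c' : Letter} (hc : c ≠ .A) (hc' : c' ≠ .A) :
    NormalWord (c :: w) ↔ NormalWord (c' :: w) := by
  simp [normalWord_cons, altPair_congr_left hc hc']

lemma exists_shorter_of_not_normalWord {w : List Letter} (h : ¬NormalWord w) :
    ∃ w', evalWord w' = evalWord w ∧ w'.length < w.length := by
  obtain ⟨a, b, v₁, v₂, rfl, hab⟩ : ∃ a b v₁ v₂, w = v₁ ++ a :: b :: v₂ ∧ ¬AltPair a b := by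
    by_contra! hw
    exact h (List.isChain_iff_forall_rel_of_append_cons_cons.2 fun _ _ _ _ => hw _ _ _ _)
  rcases Letter.eq_inv_or_eq_of_not_altPair hab with rfl | ⟨rfl, ha⟩
  · exact ⟨v₁ ++ v₂, by simp, by simp⟩
  · exact ⟨v₁ ++ a.inv :: v₂, by simp [← mul_assoc, Letter.toG_mul_self ha], by simp⟩

lemma normalWord_sandwich {x₀ y : List Letter} {ℓ c d : Letter} (hℓ : ℓ ≠ .A) (hc : c ≠ .A)
    (hd : d ≠ .A) (hx : NormalWord (x₀ ++ [ℓ])) (hy : NormalWord (d :: (y ++ [d]))) :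
    NormalWord (x₀ ++ c :: (y ++ c.inv :: (y ++ c :: invWord x₀))) := by
  have hc' : c.inv ≠ .A := Letter.inv_eq_A_iff.not.2 hc
  have hy' : ∀ {e e'}, e ≠ .A → e' ≠ .A → NormalWord (e :: (y ++ [e'])) := fun he he' =>
    (normalWord_cons_congr hd he).1 <| (normalWord_concat_congr (w := d :: y) hd he').1 hy
  have hinv : NormalWord (c :: invWord x₀) := by
    simpa using ((normalWord_concat_congr hℓ hc').1 hx).invWord
  refine normalWord_split.2 ⟨(normalWord_concat_congr hℓ hc).1 hx, ?_⟩
  refine (normalWord_split (v := c :: y)).2 ⟨hy' hc hc', ?_⟩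
  exact (normalWord_split (v := c.inv :: y)).2 ⟨hy' hc' hc, hinv⟩

lemma normalWord_conj {x u : List Letter} (hx : NormalWord x) (hu : NormalWord u) (hu₀ : u ≠ [])
    (hxu : ∀ a ∈ x.getLast?, ∀ b ∈ u.head?, AltPair a b)
    (hux : ∀ a ∈ u.getLast?, ∀ b ∈ x.getLast?, AltPair a b.inv) :
    NormalWord (x ++ u ++ invWord x) := by
  refine normalWord_append.2 ⟨normalWord_append.2 ⟨hx, hu, hxu⟩, hx.invWord, ?_⟩
  simpa [List.getLast?_append_of_ne_nil _ hu₀, invWord, List.head?_reverse] using hux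

lemma CyclicallyReducedWord.ne_nil {w : List Letter} (h : CyclicallyReducedWord w) : w ≠ [] := by
  rintro rfl
  simp [CyclicallyReducedWord] at h

lemma cyclicallyReducedWord_cons_iff {a : Letter} {w : List Letter} (hw : w ≠ []) :
    CyclicallyReducedWord (a :: w) ↔ NormalWord (a :: w) ∧ AltPair a (w.getLast hw) := by
  obtain ⟨b, w, rfl⟩ := List.exists_cons_of_ne_nil hw
  simp [CyclicallyReducedWord, List.getLast?_eq_some_getLast, AltPair]

lemma cyclicallyReducedWord_concat_iff {a : Letter} {w : List Letter} (hw : w ≠ []) :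
    CyclicallyReducedWord (w ++ [a]) ↔ NormalWord (w ++ [a]) ∧ AltPair (w.head hw) a := by
  obtain ⟨b, w, rfl⟩ := List.exists_cons_of_ne_nil hw
  simp [CyclicallyReducedWord, List.getLast?_cons, AltPair]

lemma cyclicallyReducedWord_cons_iff_concat {a : Letter} {w : List Letter} :
    CyclicallyReducedWord (a :: w) ↔ CyclicallyReducedWord (w ++ [a]) := by
  rcases eq_or_ne w [] with rfl | hw
  · rfl
  rw [cyclicallyReducedWord_cons_iff hw, cyclicallyReducedWord_concat_iff hw, normalWord_cons,
    normalWord_append]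
  simp only [List.head?_eq_some_head hw, List.getLast?_eq_some_getLast hw, Option.mem_def,
    Option.some.injEq, forall_eq', normalWord_singleton, true_and, List.head?_cons]
  exact ⟨fun ⟨⟨h₁, h₂⟩, h₃⟩ => ⟨⟨h₂, h₃.symm⟩, h₁.symm⟩,
    fun ⟨⟨h₂, h₃⟩, h₁⟩ => ⟨⟨h₁.symm, h₂⟩, h₃.symm⟩⟩

lemma CyclicallyReducedWord.normalWord_cons_concat {a : Letter} {w : List Letter}
    (h : CyclicallyReducedWord (a :: w)) (hw : w ≠ []) : NormalWord (a :: (w ++ [a])) := by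
  rw [cyclicallyReducedWord_cons_iff hw] at h
  rw [← List.cons_append, normalWord_append]
  refine ⟨h.1, normalWord_singleton a, ?_⟩
  simpa [List.getLast?_cons, List.getLast?_eq_some_getLast hw] using h.2.symm

section Stallings

variable {H : Subgroup PSL2Z}

lemma readW_mk (s : PSL2Z) (w : List Letter) :
    readW (Quotient.mk (cosetSetoid H) s) w = Quotient.mk _ (s * evalWord w) := by
  induction w generalizing s with
  | nil => exact (congrArg _ (mul_one s)).symm
  | cons ℓ w ih => rw [evalWord_cons, ← mul_assoc]; exact ih (s * ℓ.toG)

lemma readW_append (v : Coset H) (p q : List Letter) : readW v (p ++ q) = readW (readW v p) q :=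
  List.foldl_append

lemma readW_base_eq_iff {p q : List Letter} :
    readW (base H) p = readW (base H) q ↔ evalWord p * (evalWord q)⁻¹ ∈ H := by
  rw [base, readW_mk, readW_mk, one_mul, one_mul]
  exact Quotient.eq (r := cosetSetoid H)

lemma labelsPathFrom_append (v : Coset H) (p q : List Letter) :
    labelsPathFrom H v (p ++ q) ↔ labelsPathFrom H v p ∧ labelsPathFrom H (readW v p) q := by
  induction p generalizing v with
  | nil => simp [labelsPathFrom, readW]
  | cons ℓ p ih => simp [labelsPathFrom, ih, readW, and_assoc]

lemma edgeOk_of_edgeOkAux {v : Coset H} {ℓ : Letter} (h : edgeOkAux H v ℓ) : edgeOk H v ℓ := by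
  cases ℓ <;> exact Or.inl h

lemma labelsPathFrom_base_of_normalWord {w : List Letter} (hw : NormalWord w)
    (hwH : evalWord w ∈ H) : labelsPathFrom H (base H) w := by
  suffices ∀ q p, w = p ++ q → labelsPathFrom H (readW (base H) p) q from this w [] rfl
  intro q
  induction q with
  | nil => exact fun _ _ => trivial
  | cons ℓ q ih =>
    intro p hpq
    refine ⟨edgeOk_of_edgeOkAux ⟨w, p, q, hw, hwH, hpq, rfl⟩, ?_⟩
    have := ih (p ++ [ℓ]) (by simp [hpq])
    rwa [readW_append] at this

lemma labelsPathFrom_of_normalWord {p q r : List Letter} (hw : NormalWord (p ++ q ++ r))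
    (hwH : evalWord (p ++ q ++ r) ∈ H) : labelsPathFrom H (readW (base H) p) q := by
  have := labelsPathFrom_base_of_normalWord hw hwH
  rw [labelsPathFrom_append, labelsPathFrom_append] at this
  exact this.1.2

end Stallings

/-- A certificate, by normal forms of elements of `H`, that `x` labels a path from the base
vertex of the Stallings graph and `u` a path from its end: `p` ends in the coset of `x`. -/
def ReadAlongNormalCycles (H : Subgroup PSL2Z) (x u : List Letter) : Prop :=
  (∃ r, NormalWord (x ++ r) ∧ evalWord (x ++ r) ∈ H) ∧
    ∃ p r, NormalWord (p ++ u ++ r) ∧ evalWord (p ++ u ++ r) ∈ H ∧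
      evalWord p * (evalWord x)⁻¹ ∈ H

section ReadAlongNormalCycles

variable {H : Subgroup PSL2Z}

lemma ReadAlongNormalCycles.labelsPathFrom {x u : List Letter}
    (h : ReadAlongNormalCycles H x u) :
    labelsPathFrom H (base H) x ∧ labelsPathFrom H (readW (base H) x) u := by
  obtain ⟨⟨r, hxr, hxrH⟩, p, r', hw, hwH, hpx⟩ := h
  refine ⟨?_, readW_base_eq_iff.2 hpx ▸ labelsPathFrom_of_normalWord hw hwH⟩
  exact ((labelsPathFrom_append _ _ _).1 (labelsPathFrom_base_of_normalWord hxr hxrH)).1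

lemma readAlongNormalCycles_nil {u : List Letter} (hu : NormalWord u) (huH : evalWord u ∈ H) :
    ReadAlongNormalCycles H [] u :=
  ⟨⟨[], by simp, by simp [H.one_mem]⟩, [], [], by simpa using hu, by simpa using huH,
    by simp [H.one_mem]⟩

lemma readAlongNormalCycles_of_normalWord {x u : List Letter}
    (hw : NormalWord (x ++ u ++ invWord x)) (hwH : evalWord (x ++ u ++ invWord x) ∈ H) :
    ReadAlongNormalCycles H x u :=
  ⟨⟨u ++ invWord x, by simpa using hw, by simpa using hwH⟩, x, invWord x, hw, hwH,
    by simp [H.one_mem]⟩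

/-- Here `x u x⁻¹` is not normal, but `g²` has the normal form `x₀ ℓ⁻¹ u₁ ℓ u₁ ℓ⁻¹ x₀⁻¹`:
it reads `u` from the end of `x₀ ℓ⁻¹ u₁`, which lies in the coset of `x`, and its inverse
begins with `x`. -/
lemma readAlongNormalCycles_of_head_eq {x₀ u₁ : List Letter} {ℓ : Letter} (hℓ : ℓ ≠ .A)
    (hx : NormalWord (x₀ ++ [ℓ])) (hu : CyclicallyReducedWord (ℓ :: u₁)) (hu₁ : u₁ ≠ [])
    (hH : evalWord (x₀ ++ [ℓ] ++ ℓ :: u₁ ++ invWord (x₀ ++ [ℓ])) ∈ H) :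
    ReadAlongNormalCycles H (x₀ ++ [ℓ]) (ℓ :: u₁) := by
  have hℓ' : ℓ.inv ≠ .A := Letter.inv_eq_A_iff.not.2 hℓ
  have hg : evalWord (x₀ ++ [ℓ] ++ ℓ :: u₁ ++ invWord (x₀ ++ [ℓ]))
      = evalWord x₀ * ℓ.inv.toG * evalWord u₁ * ℓ.inv.toG * (evalWord x₀)⁻¹ := by
    calc _ = evalWord x₀ * (ℓ.toG * ℓ.toG) * evalWord u₁ * ℓ.toG⁻¹ * (evalWord x₀)⁻¹ := by
          simp [mul_assoc]
      _ = _ := by rw [Letter.toG_mul_self hℓ, Letter.toG_inv]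
  have hw : NormalWord (x₀ ++ ℓ.inv :: u₁ ++ ℓ :: u₁ ++ invWord (x₀ ++ [ℓ])) := by
    simpa using normalWord_sandwich (c := ℓ.inv) hℓ hℓ' hℓ hx (hu.normalWord_cons_concat hu₁)
  have hwH : evalWord (x₀ ++ ℓ.inv :: u₁ ++ ℓ :: u₁ ++ invWord (x₀ ++ [ℓ])) ∈ H := by
    convert pow_mem hH 2 using 1
    rw [hg, sq_conj_of_mul_self_eq_inv (Letter.toG_mul_self hℓ')]
    simp [mul_assoc]
  refine ⟨⟨invWord (x₀ ++ ℓ.inv :: u₁ ++ ℓ :: u₁), by simpa using hw.invWord,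
    by simpa [mul_assoc] using inv_mem hwH⟩, _, _, hw, hwH, ?_⟩
  convert hH using 1
  rw [hg]
  simp [mul_assoc]

/-- Here `x u x⁻¹` is not normal, but `g²` has the normal form `x₀ ℓ u₂ ℓ⁻¹ u₂ ℓ x₀⁻¹`,
which begins with `x u`. -/
lemma readAlongNormalCycles_of_getLast_eq {x₀ u₂ : List Letter} {ℓ : Letter} (hℓ : ℓ ≠ .A)
    (hx : NormalWord (x₀ ++ [ℓ])) (hu : CyclicallyReducedWord (u₂ ++ [ℓ.inv])) (hu₂ : u₂ ≠ [])
    (hH : evalWord (x₀ ++ [ℓ] ++ (u₂ ++ [ℓ.inv]) ++ invWord (x₀ ++ [ℓ])) ∈ H) :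
    ReadAlongNormalCycles H (x₀ ++ [ℓ]) (u₂ ++ [ℓ.inv]) := by
  have hℓ' : ℓ.inv ≠ .A := Letter.inv_eq_A_iff.not.2 hℓ
  have hg : evalWord (x₀ ++ [ℓ] ++ (u₂ ++ [ℓ.inv]) ++ invWord (x₀ ++ [ℓ]))
      = evalWord x₀ * ℓ.toG * evalWord u₂ * ℓ.toG * (evalWord x₀)⁻¹ := by
    calc _ = evalWord x₀ * ℓ.toG * evalWord u₂ * (ℓ.toG⁻¹ * ℓ.toG⁻¹) * (evalWord x₀)⁻¹ := by
          simp [mul_assoc]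
      _ = _ := by rw [Letter.inv_toG_mul_self hℓ]
  have hw : NormalWord (x₀ ++ [ℓ] ++ (u₂ ++ [ℓ.inv]) ++ (u₂ ++ ℓ :: invWord x₀)) := by
    simpa using normalWord_sandwich (c := ℓ) hℓ hℓ hℓ' hx
      (cyclicallyReducedWord_cons_iff_concat.2 hu |>.normalWord_cons_concat hu₂)
  have hwH : evalWord (x₀ ++ [ℓ] ++ (u₂ ++ [ℓ.inv]) ++ (u₂ ++ ℓ :: invWord x₀)) ∈ H := by
    convert pow_mem hH 2 using 1
    rw [hg, sq_conj_of_mul_self_eq_inv (Letter.toG_mul_self hℓ)]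
    simp [mul_assoc]
  exact ⟨⟨_, by simpa using hw, by simpa using hwH⟩, _, _, hw, hwH, by simp [H.one_mem]⟩

lemma readAlongNormalCycles_of_conj {x₀ u : List Letter} {ℓ : Letter}
    (hx : NormalWord (x₀ ++ [ℓ])) (hu : CyclicallyReducedWord u)
    (hhead : u.head? ≠ some ℓ.inv) (hlast : u.getLast? ≠ some ℓ)
    (hH : evalWord (x₀ ++ [ℓ] ++ u ++ invWord (x₀ ++ [ℓ])) ∈ H) :
    ReadAlongNormalCycles H (x₀ ++ [ℓ]) u := by
  obtain ⟨m, hm⟩ := Option.ne_none_iff_exists'.1 (by simpa using hu.ne_nil : u.head? ≠ none)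
  obtain ⟨m', hm'⟩ := Option.ne_none_iff_exists'.1 (by simpa using hu.ne_nil : u.getLast? ≠ none)
  by_cases h₁ : AltPair ℓ m
  · by_cases h₂ : AltPair m' ℓ.inv
    · refine readAlongNormalCycles_of_normalWord
        (normalWord_conj hx hu.1 hu.ne_nil ?_ ?_) hH <;> simpa [hm, hm']
    rcases Letter.eq_inv_or_eq_of_not_altPair h₂ with h | ⟨rfl, hℓ⟩
    · exact absurd (Letter.inv_inj.1 h ▸ hm') hlast
    obtain ⟨u₂, rfl⟩ := List.getLast?_eq_some_iff.1 hm'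
    refine readAlongNormalCycles_of_getLast_eq (Letter.inv_eq_A_iff.not.1 hℓ) hx hu ?_ hH
    rintro rfl
    simp at hhead
  rcases Letter.eq_inv_or_eq_of_not_altPair h₁ with rfl | ⟨rfl, hℓ⟩
  · exact absurd hm hhead
  obtain ⟨u₁, rfl⟩ := List.head?_eq_some_iff.1 hm
  refine readAlongNormalCycles_of_head_eq hℓ hx hu ?_ hH
  rintro rfl
  simp at hlast

end ReadAlongNormalCycles

def IsMinimalConjugator (g : PSL2Z) (x : List Letter) : Prop :=
  ∀ x' u' : List Letter, CyclicallyReducedWord u' →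
    evalWord u' = (evalWord x')⁻¹ * g * evalWord x' → x.length ≤ x'.length

namespace IsMinimalConjugator

variable {g : PSL2Z} {u : List Letter}

lemma normalWord {x : List Letter} (h : IsMinimalConjugator g x) (hu : CyclicallyReducedWord u)
    (hxu : evalWord u = (evalWord x)⁻¹ * g * evalWord x) : NormalWord x := by
  by_contra hx
  obtain ⟨x', hx', hlt⟩ := exists_shorter_of_not_normalWord hx
  exact (h x' u hu (hx' ▸ hxu)).not_gt hlt

lemma head?_ne {x₀ : List Letter} {ℓ : Letter} (h : IsMinimalConjugator g (x₀ ++ [ℓ]))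
    (hu : CyclicallyReducedWord u)
    (hxu : evalWord u = (evalWord (x₀ ++ [ℓ]))⁻¹ * g * evalWord (x₀ ++ [ℓ])) :
    u.head? ≠ some ℓ.inv := by
  intro hm
  obtain ⟨u₁, rfl⟩ := List.head?_eq_some_iff.1 hm
  have := h x₀ (u₁ ++ [ℓ.inv]) (cyclicallyReducedWord_cons_iff_concat.1 hu) <| by
    calc evalWord (u₁ ++ [ℓ.inv]) = ℓ.toG * evalWord (ℓ.inv :: u₁) * ℓ.toG⁻¹ := by simp
      _ = _ := by rw [hxu]; simp [mul_assoc]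
  simp at this

lemma getLast?_ne {x₀ : List Letter} {ℓ : Letter} (h : IsMinimalConjugator g (x₀ ++ [ℓ]))
    (hu : CyclicallyReducedWord u)
    (hxu : evalWord u = (evalWord (x₀ ++ [ℓ]))⁻¹ * g * evalWord (x₀ ++ [ℓ])) :
    u.getLast? ≠ some ℓ := by
  intro hm
  obtain ⟨u₂, rfl⟩ := List.getLast?_eq_some_iff.1 hm
  have := h x₀ (ℓ :: u₂) (cyclicallyReducedWord_cons_iff_concat.2 hu) <| by
    calc evalWord (ℓ :: u₂) = ℓ.toG * evalWord (u₂ ++ [ℓ]) * ℓ.toG⁻¹ := by simp [mul_assoc]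
      _ = _ := by rw [hxu]; simp [mul_assoc]
  simp at this

end IsMinimalConjugator

theorem path_and_cycle_of_min_conjugator_general (H : Subgroup PSL2Z)
    (g : PSL2Z) (hgH : g ∈ H)
    (x u : List Letter) (hu : CyclicallyReducedWord u)
    (hxu : evalWord u = (evalWord x)⁻¹ * g * evalWord x)
    (hmin : ∀ x' u' : List Letter, CyclicallyReducedWord u' →
      evalWord u' = (evalWord x')⁻¹ * g * evalWord x' → x.length ≤ x'.length) :
    labelsPathFrom H (base H) x ∧ labelsCycleAt H (readW (base H) x) u := by
  have hmin : IsMinimalConjugator g x := hmin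
  have hH : evalWord (x ++ u ++ invWord x) ∈ H := by simpa [hxu, mul_assoc] using hgH
  have hread : ReadAlongNormalCycles H x u := by
    rcases x.eq_nil_or_concat' with rfl | ⟨x₀, ℓ, rfl⟩
    · exact readAlongNormalCycles_nil hu.1 (by simpa using hH)
    · exact readAlongNormalCycles_of_conj (hmin.normalWord hu hxu) hu (hmin.head?_ne hu hxu)
        (hmin.getLast?_ne hu hxu) hH
  obtain ⟨hx, hux⟩ := hread.labelsPathFrom
  refine ⟨hx, hux, ?_⟩
  rw [← readW_append, readW_base_eq_iff]
  simpa [mul_assoc] using hH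

/-- If `H ≤ PSL₂(ℤ)` is finitely generated, `g ∈ H` is non-trivial, and `x` is a
word of minimal length such that `u = x⁻¹ g x` is cyclically reduced, then the
Stallings graph of `H` has an `x`-labeled path from the base vertex to some
vertex `v₁` and a `u`-labeled cycle at `v₁`. -/
theorem path_and_cycle_of_min_conjugator (H : Subgroup PSL2Z) (hH : H.FG)
    (g : PSL2Z) (hgH : g ∈ H) (hg : g ≠ 1)
    (x u : List Letter) (hu : CyclicallyReducedWord u)
    (hxu : evalWord u = (evalWord x)⁻¹ * g * evalWord x)
    (hmin : ∀ x' u' : List Letter, CyclicallyReducedWord u' →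
      evalWord u' = (evalWord x')⁻¹ * g * evalWord x' → x.length ≤ x'.length) :
    labelsPathFrom H (base H) x ∧ labelsCycleAt H (readW (base H) x) u :=
  path_and_cycle_of_min_conjugator_general H g hgH x u hu hxu hmin
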